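/- Consider the free abelian groups C⁵ with basis {e^{0,5}, e^{1,4}, e^{2,3}, e^{3,2}, e^{4,1}, e^{5,0}}, C⁶ with basis {e^{1,5}, e^{2,4}, e^{3,3}, e^{4,2}, e^{5,1}, e^{6,0}}, and C⁷ with basis {e^{2,5}, e^{3,4}, e^{4,3}, e^{5,2}, e^{6,1}}, and the group homomorphisms δ⁵ : C⁵ → C⁶ determined by δ⁵(e^{2,3}) = 2e^{2,4}, δ⁵(e^{4,1}) = 2e^{4,2}, and δ⁵ = 0 on the other basis elements, and δ⁶ : C⁶ → C⁷ determined by δ⁶(e^{3,3}) = −2e^{3,4}, δ⁶(e^{5,1}) = −2e^{5,2}, and δ⁶ = 0 on the other basis elements. Then δ⁶ ∘ δ⁵ = 0, and the quotient group ker(δ⁶)/im(δ⁵) is isomorphic to ℤ ⊕ ℤ ⊕ ℤ/2 ⊕ ℤ/2. (This cochain complex computes the twisted cohomology H⁶(X₁₁; L) of the manifold X₁₁ = (S⁶ × S⁵)/(ℤ/2 × ℤ/2) with coefficients in the local system L, so H⁶(X₁₁; L) ≅ ℤ² ⊕ (ℤ/2)².) -/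

import Mathlib

/-!
The cochain groups `C⁵`, `C⁶`, `C⁷` are free abelian groups; we realize them as
`Fin 6 → ℤ`, `Fin 6 → ℤ`, `Fin 5 → ℤ`, with the bases ordered as follows:
* `C⁵`: `e^{0,5}, e^{1,4}, e^{2,3}, e^{3,2}, e^{4,1}, e^{5,0}` are `Pi.single 0 1, …, Pi.single 5 1`;
* `C⁶`: `e^{1,5}, e^{2,4}, e^{3,3}, e^{4,2}, e^{5,1}, e^{6,0}` are `Pi.single 0 1, …, Pi.single 5 1`;
* `C⁷`: `e^{2,5}, e^{3,4}, e^{4,3}, e^{5,2}, e^{6,1}` are `Pi.single 0 1, …, Pi.single 4 1`.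
-/

/-- `δ⁵ : C⁵ → C⁶`, determined by `δ⁵(e^{2,3}) = 2e^{2,4}`, `δ⁵(e^{4,1}) = 2e^{4,2}` and
`δ⁵ = 0` on the other basis elements. -/
def delta5 : (Fin 6 → ℤ) →ₗ[ℤ] (Fin 6 → ℤ) where
  toFun v := fun j => if j = 1 then 2 * v 2 else if j = 3 then 2 * v 4 else 0
  map_add' x y := by funext j; simp only [Pi.add_apply]; split_ifs <;> ring
  map_smul' c x := by funext j; simp only [Pi.smul_apply, RingHom.id_apply, smul_eq_mul]
                      split_ifs <;> ring

/-- `δ⁶ : C⁶ → C⁷`, determined by `δ⁶(e^{3,3}) = -2e^{3,4}`, `δ⁶(e^{5,1}) = -2e^{5,2}` and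
`δ⁶ = 0` on the other basis elements. -/
def delta6 : (Fin 6 → ℤ) →ₗ[ℤ] (Fin 5 → ℤ) where
  toFun v := fun j => if j = 1 then -2 * v 2 else if j = 3 then -2 * v 4 else 0
  map_add' x y := by funext j; simp only [Pi.add_apply]; split_ifs <;> ring
  map_smul' c x := by funext j; simp only [Pi.smul_apply, RingHom.id_apply, smul_eq_mul]
                      split_ifs <;> ring

/-!
A cocycle of `δ⁶` is a cochain vanishing at `e^{3,3}` and `e^{5,1}`, and the coboundaries are the
cochains supported on `e^{2,4}, e^{4,2}` with even coefficients there. Hence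
`(v_{1,5}, v_{6,0}, v_{2,4} mod 2, v_{4,2} mod 2)` is a surjection from the cocycles onto
`ℤ × ℤ × ℤ/2 × ℤ/2` whose kernel is exactly the coboundaries.
-/

lemma delta5_single (i : Fin 6) :
    delta5 (Pi.single i 1) =
      if i = 2 then (2 : ℤ) • Pi.single 1 1 else if i = 4 then (2 : ℤ) • Pi.single 3 1 else 0 := by
  fin_cases i <;> ext j <;> fin_cases j <;> simp [delta5]

lemma delta6_single (i : Fin 6) :
    delta6 (Pi.single i 1) =
      if i = 2 then (-2 : ℤ) • Pi.single 1 1 else if i = 4 then (-2 : ℤ) • Pi.single 3 1 else 0 := by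
  fin_cases i <;> ext j <;> fin_cases j <;> simp [delta6]

lemma delta6_comp_delta5 : delta6.comp delta5 = 0 := by
  ext v j
  fin_cases j <;> simp [delta5, delta6]

lemma mem_ker_delta6 {v : Fin 6 → ℤ} : v ∈ LinearMap.ker delta6 ↔ v 2 = 0 ∧ v 4 = 0 := by
  refine ⟨fun hv => ?_, fun ⟨h2, h4⟩ => ?_⟩
  · have h1 := congrFun hv 1
    have h3 := congrFun hv 3
    simp only [delta6] at h1 h3
    simp_all
  · ext j
    simp [delta6, h2, h4]

lemma mem_range_delta5 {v : Fin 6 → ℤ} :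
    v ∈ LinearMap.range delta5 ↔
      v 0 = 0 ∧ 2 ∣ v 1 ∧ v 2 = 0 ∧ 2 ∣ v 3 ∧ v 4 = 0 ∧ v 5 = 0 := by
  constructor
  · rintro ⟨u, rfl⟩
    simp [delta5]
  · rintro ⟨h0, ⟨m, hm⟩, h2, ⟨n, hn⟩, h4, h5⟩
    refine ⟨![0, 0, m, 0, n, 0], ?_⟩
    ext j
    fin_cases j <;> simp [delta5, h0, hm, h2, hn, h4, h5]

noncomputable def cocycleCoords : LinearMap.ker delta6 →ₗ[ℤ] ℤ × ℤ × ZMod 2 × ZMod 2 where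
  toFun v := (v.1 0, v.1 5, (v.1 1 : ZMod 2), (v.1 3 : ZMod 2))
  map_add' x y := by simp
  map_smul' c x := by simp [Prod.smul_def, zsmul_eq_mul]

lemma cocycleCoords_surjective : Function.Surjective cocycleCoords := by
  rintro ⟨a, b, c, d⟩
  refine ⟨⟨![a, c.val, 0, d.val, 0, b], mem_ker_delta6.2 ⟨rfl, rfl⟩⟩, ?_⟩
  simp [cocycleCoords]

lemma ker_cocycleCoords :
    LinearMap.ker cocycleCoords =
      (LinearMap.range delta5).comap (LinearMap.ker delta6).subtype := by
  ext ⟨v, hv⟩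
  obtain ⟨h2, h4⟩ := mem_ker_delta6.1 hv
  simp only [LinearMap.mem_ker, Submodule.mem_comap, Submodule.subtype_apply, mem_range_delta5,
    cocycleCoords, LinearMap.coe_mk, AddHom.coe_mk, Prod.mk_eq_zero,
    ZMod.intCast_zmod_eq_zero_iff_dvd, h2, h4]
  tauto

/-- The twisted-cohomology cochain complex of `X₁₁ = (S⁶ × S⁵)/(ℤ/2 × ℤ/2)`:
`δ⁵` and `δ⁶` take the stated values on basis elements, `δ⁶ ∘ δ⁵ = 0`, and
`H⁶ = ker δ⁶ / im δ⁵ ≅ ℤ ⊕ ℤ ⊕ ℤ/2 ⊕ ℤ/2`. -/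
theorem twisted_cohomology_X11 :
    delta5 (Pi.single 2 1) = (2 : ℤ) • Pi.single 1 1 ∧
    delta5 (Pi.single 4 1) = (2 : ℤ) • Pi.single 3 1 ∧
    (∀ i : Fin 6, i ≠ 2 → i ≠ 4 → delta5 (Pi.single i 1) = 0) ∧
    delta6 (Pi.single 2 1) = (-2 : ℤ) • Pi.single 1 1 ∧
    delta6 (Pi.single 4 1) = (-2 : ℤ) • Pi.single 3 1 ∧
    (∀ i : Fin 6, i ≠ 2 → i ≠ 4 → delta6 (Pi.single i 1) = 0) ∧
    delta6.comp delta5 = 0 ∧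
    Nonempty
      ((↥(LinearMap.ker delta6) ⧸
          Submodule.comap (LinearMap.ker delta6).subtype (LinearMap.range delta5)) ≃+
        (ℤ × ℤ × ZMod 2 × ZMod 2)) := by
  refine ⟨by simp [delta5_single], by simp [delta5_single],
    fun i h2 h4 => by simp [delta5_single, h2, h4], by simp [delta6_single],
    by simp [delta6_single], fun i h2 h4 => by simp [delta6_single, h2, h4], delta6_comp_delta5, ?_⟩
  exact ⟨((Submodule.quotEquivOfEq _ _ ker_cocycleCoords.symm).trans
    (cocycleCoords.quotKerEquivOfSurjective cocycleCoords_surjective)).toAddEquiv⟩
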